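/- Let L be an effect algebra and μ : L → ℝ an additive measure. If μ is bounded (sup_{a∈L} |μ(a)| < ∞), then μ is exhaustive: for every orthogonal sequence (a_n) in L, μ(a_n) → 0. -/

import Mathlib

open Filter Topology
open scoped ENNReal NNReal

/-- An effect algebra: a partial commutative monoid with orthosupplementation
and the zero-one law. `D a b` means `a ⊕ b` is defined; `add` is the (junk-valued
outside `D`) total extension of `⊕`. -/
structure EffectAlgebra (L : Type*) where
  D : L → L → Prop
  add : L → L → L
  zero : L
  one : L
  comm_def : ∀ {a b}, D a b → D b a
  comm : ∀ {a b}, D a b → add a b = add b a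
  assoc_def₁ : ∀ {a b c}, D b c → D a (add b c) → D a b
  assoc_def₂ : ∀ {a b c}, D b c → D a (add b c) → D (add a b) c
  assoc : ∀ {a b c}, D b c → D a (add b c) → add (add a b) c = add a (add b c)
  orth : ∀ a, ∃! a', D a a' ∧ add a a' = one
  zero_one : ∀ {a}, D one a → a = zero

namespace EffectAlgebra

variable {L : Type*}

/-- The canonical order: `a ≤ b` iff `a ⊕ r = b` for some `r`. -/
def le (E : EffectAlgebra L) (a b : L) : Prop := ∃ r, E.D a r ∧ E.add a r = b

/-- The orthosupplement `1 ⊖ a`. -/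
noncomputable def compl (E : EffectAlgebra L) (a : L) : L := (E.orth a).choose

/-- Partial sums `a 0 ⊕ ⋯ ⊕ a n`. -/
def psum (E : EffectAlgebra L) (a : ℕ → L) : ℕ → L
  | 0 => a 0
  | n + 1 => E.add (E.psum a n) (a (n + 1))

/-- A sequence is orthogonal when all its finite orthosums are defined. -/
def Orthogonal (E : EffectAlgebra L) (a : ℕ → L) : Prop :=
  ∀ n, E.D (E.psum a n) (a (n + 1))

/-- `s` is the supremum of the set `S` in the canonical order. -/
def IsSup (E : EffectAlgebra L) (S : Set L) (s : L) : Prop :=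
  (∀ x ∈ S, E.le x s) ∧ ∀ u, (∀ x ∈ S, E.le x u) → E.le s u

/-- `s = ⊕ₙ a n`: the sequence is orthogonal and `s` is the sup of the finite orthosums. -/
def IsOrthoSum (E : EffectAlgebra L) (a : ℕ → L) (s : L) : Prop :=
  E.Orthogonal a ∧ E.IsSup (Set.range (E.psum a)) s

/-- Additive (finitely additive) measure. -/
def IsMeasure {G : Type*} [AddCommMonoid G] (E : EffectAlgebra L) (μ : L → G) : Prop :=
  ∀ a b, E.D a b → μ (E.add a b) = μ a + μ b

/-- σ-additivity: `μ (⊕ₙ a n) = Σₙ μ (a n)` whenever the orthosum exists. -/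
def SigmaAdditive {G : Type*} [AddCommMonoid G] [TopologicalSpace G]
    (E : EffectAlgebra L) (μ : L → G) : Prop :=
  ∀ a s, E.IsOrthoSum a s →
    Tendsto (fun n => ∑ k ∈ Finset.range n, μ (a k)) atTop (𝓝 (μ s))

/-- Exhaustivity: `μ (a n) → 0` along every orthogonal sequence. -/
def Exhaustive {G : Type*} [AddCommMonoid G] [TopologicalSpace G]
    (E : EffectAlgebra L) (μ : L → G) : Prop :=
  ∀ a, E.Orthogonal a → Tendsto (fun n => μ (a n)) atTop (𝓝 0)

/-- A generator: every element is the sup of an increasing sequence from `B`. -/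
def IsGenerator (E : EffectAlgebra L) (B : Set L) : Prop :=
  ∀ a : L, ∃ b : ℕ → L, (∀ n, b n ∈ B) ∧ (∀ n, E.le (b n) (b (n + 1)))
    ∧ E.IsSup (Set.range b) a

/-- Riesz decomposition property. -/
def RDP (E : EffectAlgebra L) : Prop :=
  ∀ a b c, E.D a b → E.le c (E.add a b) →
    ∃ c₁ c₂, E.D c₁ c₂ ∧ E.add c₁ c₂ = c ∧ E.le c₁ a ∧ E.le c₂ b

/-- Strong Riesz decomposition property. -/
def sRDP (E : EffectAlgebra L) : Prop :=
  ∀ (a : ℕ → L) (s c : L), E.IsOrthoSum a s → E.le c s →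
    ∃ c' : ℕ → L, E.IsOrthoSum c' c ∧ ∀ n, E.le (c' n) (a n)

/-- A natural basis: an orthogonal sequence of minimal nonzero elements with orthosum `1`. -/
def IsNaturalBasis (E : EffectAlgebra L) (b : ℕ → L) : Prop :=
  E.IsOrthoSum b E.one ∧
  ∀ n, b n ≠ E.zero ∧ ∀ c, c ≠ E.zero → E.le c (b n) → c = b n

/-- The set of finite orthosums of elements of the sequence `b`. -/
def finOrthosums (E : EffectAlgebra L) (b : ℕ → L) : Set L :=
  { x | ∃ c : ℕ → L, (∀ n, c n = b n ∨ c n = E.zero) ∧ E.Orthogonal c ∧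
        ∃ N, x = E.psum c N }

/-- A sequence of measures is pointwise convergent. -/
def PtwiseConv (μ : ℕ → L → ℝ) : Prop :=
  ∀ a : L, ∃ x : ℝ, Tendsto (fun i => μ i a) atTop (𝓝 x)

/-- Uniform exhaustivity of a sequence of measures. -/
def UnifExhaustive (E : EffectAlgebra L) (μ : ℕ → L → ℝ) : Prop :=
  ∀ a, E.Orthogonal a →
    TendstoUniformly (fun n (i : ℕ) => μ i (a n)) (fun _ => (0 : ℝ)) atTop

/-- Uniform strong additivity of a sequence of measures. -/
def UnifStronglyAdditive (E : EffectAlgebra L) (μ : ℕ → L → ℝ) : Prop :=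
  ∀ a, E.Orthogonal a → ∃ f : ℕ → ℝ,
    TendstoUniformly (fun n (i : ℕ) => ∑ k ∈ Finset.range n, μ i (a k)) f atTop

/-- The Nikodym property. -/
def Nikodym (E : EffectAlgebra L) : Prop :=
  ∀ μ : ℕ → L → ℝ, (∀ i, E.IsMeasure (μ i)) → (∀ i, ∃ M, ∀ a, |μ i a| ≤ M) →
    (∀ a : L, ∃ M, ∀ i, |μ i a| ≤ M) → ∃ M, ∀ i, ∀ a : L, |μ i a| ≤ M

/-- The Grothendieck property. -/
def Grothendieck (E : EffectAlgebra L) : Prop :=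
  ∀ μ : ℕ → L → ℝ, (∀ i, E.IsMeasure (μ i)) → (∀ i, ∃ M, ∀ a, |μ i a| ≤ M) →
    PtwiseConv μ → (∃ M, ∀ i, ∀ a : L, |μ i a| ≤ M) → E.UnifStronglyAdditive μ

/-- The Vitali-Hahn-Saks property. -/
def VHS (E : EffectAlgebra L) : Prop :=
  ∀ μ : ℕ → L → ℝ, (∀ i, E.IsMeasure (μ i)) → (∀ i, ∃ M, ∀ a, |μ i a| ≤ M) →
    PtwiseConv μ → E.UnifExhaustive μ

/-- The σ-Nikodym property. -/
def SigmaNikodym (E : EffectAlgebra L) : Prop :=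
  ∀ μ : ℕ → L → ℝ, (∀ i, E.IsMeasure (μ i)) → (∀ i, E.SigmaAdditive (μ i)) →
    (∀ i, ∃ M, ∀ a, |μ i a| ≤ M) →
    (∀ a : L, ∃ M, ∀ i, |μ i a| ≤ M) → ∃ M, ∀ i, ∀ a : L, |μ i a| ≤ M

/-- The σ-Vitali-Hahn-Saks property. -/
def SigmaVHS (E : EffectAlgebra L) : Prop :=
  ∀ μ : ℕ → L → ℝ, (∀ i, E.IsMeasure (μ i)) → (∀ i, E.SigmaAdditive (μ i)) →
    (∀ i, ∃ M, ∀ a, |μ i a| ≤ M) → PtwiseConv μ → E.UnifExhaustive μ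

/-- A bounding subset. -/
def Bounding (E : EffectAlgebra L) (B : Set L) : Prop :=
  ∀ (G : Type) [NormedAddCommGroup G], ∀ μ : ℕ → L → G,
    (∀ i, E.IsMeasure (μ i)) → (∀ i, E.SigmaAdditive (μ i)) →
    (∀ a : L, ∃ M, ∀ i, ‖μ i a‖ ≤ M) →
    ((∃ M, ∀ i, ∀ b ∈ B, ‖μ i b‖ ≤ M) ↔ (∃ M, ∀ i, ∀ a : L, ‖μ i a‖ ≤ M))

/-- A natural subset: a generator closed under orthosums of orthogonal pairs all of whose
orthogonal-complement slices are bounding. -/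
def NaturalSubset (E : EffectAlgebra L) (B : Set L) : Prop :=
  E.IsGenerator B ∧ (∀ b ∈ B, ∀ c ∈ B, E.D b c → E.add b c ∈ B) ∧
    ∀ b ∈ B, E.Bounding {c ∈ B | E.D c b}

/-- A natural effect algebra: one admitting a natural subset. -/
def Natural (E : EffectAlgebra L) : Prop := ∃ B, E.NaturalSubset B

/-- The orthogonally sequential property. -/
def OSP (E : EffectAlgebra L) : Prop :=
  ∀ b : ℕ → L, ∃ c : ℕ → L, E.Orthogonal c ∧ (∀ k, E.le (c k) (b k)) ∧
    ∀ (a : L) (k₀ : ℕ), E.le a (b k₀) → (∀ i, i ≠ k₀ → E.le (b i) (E.compl a)) →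
      E.le a (c k₀)

/-- The subsequential interpolation property. -/
def SIP (E : EffectAlgebra L) : Prop :=
  ∀ a : ℕ → L, E.Orthogonal a → ∀ M : Set ℕ, M.Infinite →
    ∃ (x : L) (N : Set ℕ), N ⊆ M ∧ N.Infinite ∧ (∀ n ∈ N, E.le (a n) x) ∧
      ∀ n ∉ N, E.le (a n) (E.compl x)

/-- Iterated orthosum starting from `x`: all steps defined. -/
def OrthoFrom (E : EffectAlgebra L) : L → List L → Prop
  | _, [] => True
  | x, y :: ys => E.D x y ∧ E.OrthoFrom (E.add x y) ys

/-- The orthosum `x ⊕ y₁ ⊕ ⋯ ⊕ yₙ` of a nonempty list. -/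
def psumList (E : EffectAlgebra L) : L → List L → L
  | x, [] => x
  | x, y :: ys => E.psumList (E.add x y) ys

/-- The variation of a measure: the sup over finite decompositions
`e = e₁ ⊕ ⋯ ⊕ eₙ` of `Σ ‖μ eᵢ‖`, valued in `[0,∞]`. -/
noncomputable def variation {G : Type*} [NormedAddCommGroup G]
    (E : EffectAlgebra L) (μ : L → G) (e : L) : ℝ≥0∞ :=
  sSup { v : ℝ≥0∞ | ∃ (x : L) (xs : List L), E.OrthoFrom x xs ∧ E.psumList x xs = e ∧
    v = ((x :: xs).map fun y => (‖μ y‖₊ : ℝ≥0∞)).sum }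

/-! The finite subsums `∑ k ∈ s, μ (a k)` of an orthogonal sequence are themselves values of `μ`:
replace the terms outside `s` by `0` and take the orthosum. Hence they are bounded by `M`, and
splitting `s` into the indices with `μ (a k) ≥ 0` and the rest bounds `∑ k ∈ s, |μ (a k)|` by
`2 M`. So `∑ μ (a k)` converges absolutely and its terms tend to `0`. -/

section Basic

variable (E : EffectAlgebra L)

theorem one_orth_zero : E.D E.one E.zero ∧ E.add E.one E.zero = E.one := by
  obtain ⟨c, ⟨hd, hc⟩, -⟩ := E.orth E.one
  obtain rfl : c = E.zero := E.zero_one hd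
  exact ⟨hd, hc⟩

theorem D_zero_left (a : L) : E.D E.zero a := by
  obtain ⟨a', ⟨hd, ha⟩, -⟩ := E.orth a
  have h : E.D E.one E.zero := E.one_orth_zero.1
  rw [← ha] at h
  exact E.assoc_def₁ hd (E.comm_def h)

theorem D_zero_right (a : L) : E.D a E.zero :=
  E.comm_def (E.D_zero_left a)

-- Both `0 ⊕ a` and `a` are orthocomplements of `a'`, where `a ⊕ a' = 1`.
protected theorem zero_add (a : L) : E.add E.zero a = a := by
  obtain ⟨a', ⟨hd, ha⟩, -⟩ := E.orth a
  have h0 : E.D E.zero (E.add a a') := ha ▸ E.D_zero_left E.one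
  have hD : E.D (E.add E.zero a) a' := E.assoc_def₂ hd h0
  have hsum : E.add (E.add E.zero a) a' = E.one := by
    rw [E.assoc hd h0, ha, E.comm (E.D_zero_left E.one), E.one_orth_zero.2]
  have h₁ : E.D a' (E.add E.zero a) ∧ E.add a' (E.add E.zero a) = E.one :=
    ⟨E.comm_def hD, by rw [← E.comm hD, hsum]⟩
  have h₂ : E.D a' a ∧ E.add a' a = E.one :=
    ⟨E.comm_def hd, by rw [← E.comm hd, ha]⟩
  exact (E.orth a').unique h₁ h₂

protected theorem add_zero (a : L) : E.add a E.zero = a := by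
  rw [E.comm (E.D_zero_right a), E.zero_add]

protected theorem le_refl (a : L) : E.le a a :=
  ⟨E.zero, E.D_zero_right a, E.add_zero a⟩

theorem zero_le (a : L) : E.le E.zero a :=
  ⟨a, E.D_zero_left a, E.zero_add a⟩

protected theorem le_trans {a b c : L} (hab : E.le a b) (hbc : E.le b c) : E.le a c := by
  obtain ⟨r, har, rfl⟩ := hab
  obtain ⟨s, hs, rfl⟩ := hbc
  have hs' : E.D s (E.add r a) := E.comm har ▸ E.comm_def hs
  have hsr : E.D s r := E.assoc_def₁ (E.comm_def har) hs'
  have hars : E.D a (E.add r s) := E.comm hsr ▸ E.comm_def (E.assoc_def₂ (E.comm_def har) hs')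
  exact ⟨E.add r s, hars, (E.assoc (E.comm_def hsr) hars).symm⟩

theorem D_and_add_le_add_right {a b c : L} (hbc : E.D b c) (hab : E.le a b) :
    E.D a c ∧ E.le (E.add a c) (E.add b c) := by
  obtain ⟨r, har, rfl⟩ := hab
  have hc : E.D c (E.add a r) := E.comm_def hbc
  have hca : E.D c a := E.assoc_def₁ har hc
  have hrca : E.D r (E.add c a) := E.comm_def (E.assoc_def₂ har hc)
  have hrc : E.D r c := E.assoc_def₁ hca hrca
  have harc : E.D a (E.add r c) := E.comm_def (E.assoc_def₂ hca hrca)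
  have hacr : E.D a (E.add c r) := E.comm hrc ▸ harc
  refine ⟨E.comm_def hca, r, E.assoc_def₂ (E.comm_def hrc) hacr, ?_⟩
  rw [E.assoc (E.comm_def hrc) hacr, E.comm (E.comm_def hrc), ← E.assoc hrc harc]

theorem D_and_add_le_add {a b c d : L} (hcd : E.D c d) (hac : E.le a c) (hbd : E.le b d) :
    E.D a b ∧ E.le (E.add a b) (E.add c d) := by
  obtain ⟨had, hadc⟩ := E.D_and_add_le_add_right hcd hac
  obtain ⟨hba, hbad⟩ := E.D_and_add_le_add_right (E.comm_def had) hbd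
  have hbad' : E.le (E.add a b) (E.add a d) := by
    rwa [E.comm hba, E.comm (E.comm_def had)] at hbad
  exact ⟨E.comm_def hba, E.le_trans hbad' hadc⟩

theorem psum_le_psum {a c : ℕ → L} (ha : E.Orthogonal a) (hca : ∀ k, E.le (c k) (a k))
    (n : ℕ) : E.le (E.psum c n) (E.psum a n) := by
  induction n with
  | zero => exact hca 0
  | succ n ih => exact (E.D_and_add_le_add (ha n) ih (hca (n + 1))).2

end Basic

variable {E : EffectAlgebra L}

theorem Orthogonal.of_le {a c : ℕ → L} (ha : E.Orthogonal a) (hca : ∀ k, E.le (c k) (a k)) :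
    E.Orthogonal c :=
  fun n => (E.D_and_add_le_add (ha n) (E.psum_le_psum ha hca n) (hca (n + 1))).1

theorem IsMeasure.map_zero {G : Type*} [AddCancelCommMonoid G] {μ : L → G}
    (hμ : E.IsMeasure μ) : μ E.zero = 0 := by
  have h := hμ E.zero E.zero (E.D_zero_left E.zero)
  rwa [E.zero_add, left_eq_add] at h

theorem IsMeasure.map_psum {G : Type*} [AddCommMonoid G] {μ : L → G} (hμ : E.IsMeasure μ)
    {a : ℕ → L} (ha : E.Orthogonal a) (n : ℕ) :
    μ (E.psum a n) = ∑ k ∈ Finset.range (n + 1), μ (a k) := by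
  induction n with
  | zero => simp [psum]
  | succ n ih => rw [psum, hμ _ _ (ha n), ih, Finset.sum_range_succ _ (n + 1)]

theorem IsMeasure.exists_eq_sum {G : Type*} [AddCancelCommMonoid G] {μ : L → G}
    (hμ : E.IsMeasure μ) {a : ℕ → L} (ha : E.Orthogonal a) (s : Finset ℕ) :
    ∃ x, μ x = ∑ k ∈ s, μ (a k) := by
  classical
  obtain ⟨n, hsn⟩ := s.exists_nat_subset_range
  set c : ℕ → L := fun k => if k ∈ s then a k else E.zero
  have hc : E.Orthogonal c := ha.of_le fun k => by
    by_cases hk : k ∈ s <;> simp [c, hk, E.le_refl, E.zero_le]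
  have hμc (k : ℕ) : μ (c k) = if k ∈ s then μ (a k) else 0 := by
    by_cases hk : k ∈ s <;> simp [c, hk, hμ.map_zero]
  refine ⟨E.psum c n, ?_⟩
  rw [hμ.map_psum hc, Finset.sum_congr rfl fun k _ => hμc k, Finset.sum_ite_mem,
    Finset.inter_eq_right.2 (hsn.trans (Finset.range_subset_range.2 n.le_succ))]

end EffectAlgebra

theorem summable_of_abs_sum_le {ι : Type*} {f : ι → ℝ} {M : ℝ}
    (h : ∀ s : Finset ι, |∑ i ∈ s, f i| ≤ M) : Summable f := by
  classical
  refine Summable.of_abs (summable_of_sum_le (c := 2 * M) (fun i => abs_nonneg (f i)) fun s => ?_)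
  set p := s.filter (0 ≤ f ·)
  set q := s.filter (¬0 ≤ f ·)
  have hp : ∑ i ∈ p, |f i| = ∑ i ∈ p, f i :=
    Finset.sum_congr rfl fun i hi => abs_of_nonneg (Finset.mem_filter.1 hi).2
  have hq : ∑ i ∈ q, |f i| = -∑ i ∈ q, f i := by
    rw [← Finset.sum_neg_distrib]
    exact Finset.sum_congr rfl fun i hi => abs_of_neg (not_le.1 (Finset.mem_filter.1 hi).2)
  rw [← Finset.sum_filter_add_sum_filter_not s (0 ≤ f ·), hp, hq]
  linarith [le_abs_self (∑ i ∈ p, f i), neg_le_abs (∑ i ∈ q, f i), h p, h q]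

open EffectAlgebra in
/-- A bounded real-valued measure on an effect algebra is exhaustive. -/
theorem stmt4 {L : Type*} (E : EffectAlgebra L) (μ : L → ℝ) (hμ : E.IsMeasure μ)
    (hb : ∃ M : ℝ, ∀ a : L, |μ a| ≤ M) : E.Exhaustive μ := by
  obtain ⟨M, hM⟩ := hb
  intro a ha
  have hsum : Summable fun k => μ (a k) := summable_of_abs_sum_le (M := M) fun s => by
    obtain ⟨x, hx⟩ := hμ.exists_eq_sum ha s
    exact hx ▸ hM x
  exact hsum.tendsto_atTop_zero
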